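/- arXiv:2108.03176 — 6 statements merged into one kernel-verified Lean document; each statement's English description precedes it below -/
import Mathlib

section
/- With u_t as above (u_t = σ(3D−3t+1)/(3D−3t+4)), for each t ∈ {1,…,D−1} the unique maximizer p*_t of p ↦ 2σp(1−p) + (1−p)²·u_{t+1} over [0,1] equals p*_t = (σ − u_{t+1})/(2σ − u_{t+1}) = 3/(3D−3t+4). -/
/-!
Completing the square: `2σp(1−p) + (1−p)²u = h(p*) − (2σ − u)(p − p*)²` with
`p* = (σ − u)/(2σ − u)`, so `p*` is the unique maximizer over all of `ℝ` as soon as `u < 2σ`.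
For `u = σ(3k−2)/(3k+1)` one has `σ − u = 3σ/(3k+1)` and `2σ − u = σ(3k+4)/(3k+1)`, whence
`p* = 3/(3k+4) ∈ [0,1]`.
-/

noncomputable def reward (σ u p : ℝ) : ℝ := 2 * σ * p * (1 - p) + (1 - p) ^ 2 * u

noncomputable def rewardMaximizer (σ u : ℝ) : ℝ := (σ - u) / (2 * σ - u)

section Reward

variable {σ u : ℝ}

theorem reward_eq_sub_sq (hc : 2 * σ - u ≠ 0) (p : ℝ) :
    reward σ u p =
      reward σ u (rewardMaximizer σ u) - (2 * σ - u) * (p - rewardMaximizer σ u) ^ 2 := by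
  unfold reward rewardMaximizer
  field_simp
  ring

theorem reward_le_reward_rewardMaximizer (hc : 0 < 2 * σ - u) (p : ℝ) :
    reward σ u p ≤ reward σ u (rewardMaximizer σ u) := by
  rw [reward_eq_sub_sq hc.ne' p]
  have := mul_nonneg hc.le (sq_nonneg (p - rewardMaximizer σ u))
  linarith

theorem eq_rewardMaximizer_of_reward_eq (hc : 0 < 2 * σ - u) {p : ℝ}
    (hp : reward σ u p = reward σ u (rewardMaximizer σ u)) : p = rewardMaximizer σ u := by
  rw [reward_eq_sub_sq hc.ne' p, sub_eq_self, mul_eq_zero, sq_eq_zero_iff] at hp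
  exact sub_eq_zero.1 (hp.resolve_left hc.ne')

end Reward

section Continuation

variable {σ k : ℝ}

theorem two_mul_sub_continuation_pos (hσ : 0 < σ) (hk : 0 ≤ k) :
    0 < 2 * σ - σ * (3 * k - 2) / (3 * k + 1) := by
  have hk' : 0 < 3 * k + 1 := by linarith
  rw [sub_pos, div_lt_iff₀ hk']
  nlinarith

theorem rewardMaximizer_continuation (hσ : 0 < σ) (hk : 0 ≤ k) :
    rewardMaximizer σ (σ * (3 * k - 2) / (3 * k + 1)) = 3 / (3 * k + 4) := by
  have hk₁ : 3 * k + 1 ≠ 0 := by positivity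
  rw [rewardMaximizer, div_eq_div_iff (two_mul_sub_continuation_pos hσ hk).ne' (by positivity)]
  field_simp
  ring

theorem three_div_mem_Icc (hk : 0 ≤ k) : 3 / (3 * k + 4) ∈ Set.Icc (0 : ℝ) 1 :=
  ⟨by positivity, (div_le_one (by positivity)).2 (by linarith)⟩

end Continuation

theorem stmt3_general (σ : ℝ) (hσ : 0 < σ) (D t : ℕ) (hD : 2 ≤ D) (ht' : t ≤ D - 1) :
    let u : ℝ := σ * (3 * (D - t) - 2 : ℕ) / (3 * (D - t) + 1 : ℕ)
    let h : ℝ → ℝ := fun p => 2 * σ * p * (1 - p) + (1 - p) ^ 2 * u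
    let pstar : ℝ := (σ - u) / (2 * σ - u)
    pstar = 3 / (3 * (D - t) + 4 : ℕ) ∧
    pstar ∈ Set.Icc (0:ℝ) 1 ∧
    (∀ p ∈ Set.Icc (0:ℝ) 1, h p ≤ h pstar) ∧
    (∀ p ∈ Set.Icc (0:ℝ) 1, h p = h pstar → p = pstar) := by
  intro u h pstar
  have hk : 2 ≤ 3 * (D - t) := by omega
  set k : ℝ := ((D - t : ℕ) : ℝ)
  have hu : u = σ * (3 * k - 2) / (3 * k + 1) := by
    simp only [u, k, Nat.cast_sub hk]
    push_cast
    rfl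
  have hk₀ : 0 ≤ k := Nat.cast_nonneg _
  have hc : 0 < 2 * σ - u := hu ▸ two_mul_sub_continuation_pos hσ hk₀
  have hpstar : pstar = 3 / (3 * k + 4) := by
    rw [← rewardMaximizer_continuation hσ hk₀, ← hu]
    rfl
  refine ⟨by simp only [hpstar, k]; push_cast; rfl, hpstar ▸ three_div_mem_Icc hk₀,
    fun p _ => reward_le_reward_rewardMaximizer hc p,
    fun p _ hp => eq_rewardMaximizer_of_reward_eq hc hp⟩

/-- For `u_{t+1} = σ(3D−3t−2)/(3D−3t+1)`, the unique maximizer of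
`p ↦ 2σp(1−p) + (1−p)²·u_{t+1}` over `[0,1]` is `(σ−u_{t+1})/(2σ−u_{t+1}) = 3/(3D−3t+4)`. -/
theorem stmt3 (σ : ℝ) (hσ : 0 < σ) (D t : ℕ) (hD : 2 ≤ D) (ht : 1 ≤ t) (ht' : t ≤ D - 1) :
    let u : ℝ := σ * (3 * (D - t) - 2 : ℕ) / (3 * (D - t) + 1 : ℕ)
    let h : ℝ → ℝ := fun p => 2 * σ * p * (1 - p) + (1 - p) ^ 2 * u
    let pstar : ℝ := (σ - u) / (2 * σ - u)
    pstar = 3 / (3 * (D - t) + 4 : ℕ) ∧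
    pstar ∈ Set.Icc (0:ℝ) 1 ∧
    (∀ p ∈ Set.Icc (0:ℝ) 1, h p ≤ h pstar) ∧
    (∀ p ∈ Set.Icc (0:ℝ) 1, h p = h pstar → p = pstar) :=
  stmt3_general σ hσ D t hD ht'
end

section
/- Define V_t(n) for t ∈ {1,…,D} and n ≥ 0 by the backward recursion V_D(n) = σ if n = 0 and V_D(n) = 0 otherwise (i.e., V_D(n) = σ·1·(1−1)^n, since q_D = 1), and, for t < D, V_t(n) = σ·q_t·(1−q_t)^n + Σ_{n'=0}^{n} C(n, n−n')·q_t^{n−n'}·(1−q_t)^{n'+1}·V_{t+1}(n'), where q_t = 1/(D−t+1). Then for all t ∈ {1,…,D} and n ≥ 0: V_t(n) = σ·(1 − 1/(D−t+1))^n. -/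
/-- The value of the "even" policy: if `V` satisfies the backward recursion with
transmission probability `q_t = 1/(D−t+1)`, then `V_t(n) = σ(1 − 1/(D−t+1))^n`. -/
theorem stmt5 (σ : ℝ) (hσ : 0 < σ) (D : ℕ) (hD : 1 ≤ D) (V : ℕ → ℕ → ℝ)
    (hterm : ∀ n : ℕ, V D n = if n = 0 then σ else 0)
    (hrec : ∀ t, 1 ≤ t → t < D → ∀ n : ℕ,
      V t n =
        σ * (1 / ((D - t : ℕ) + 1 : ℝ)) * (1 - 1 / ((D - t : ℕ) + 1 : ℝ)) ^ n +
        ∑ n' ∈ Finset.range (n + 1),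
          (n.choose (n - n') : ℝ) * (1 / ((D - t : ℕ) + 1 : ℝ)) ^ (n - n') *
            (1 - 1 / ((D - t : ℕ) + 1 : ℝ)) ^ (n' + 1) * V (t + 1) n') :
    ∀ t, 1 ≤ t → t ≤ D → ∀ n : ℕ,
      V t n = σ * (1 - 1 / ((D - t : ℕ) + 1 : ℝ)) ^ n := by
  suffices h : ∀ k t, 1 ≤ t → t ≤ D → D - t ≤ k → ∀ n : ℕ,
      V t n = σ * (1 - 1 / ((D - t : ℕ) + 1 : ℝ)) ^ n by
    intro t ht htD n; exact h (D - t) t ht htD le_rfl n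
  intro k
  induction k with
  | zero =>
    intro t ht htD hk n
    have htD' : t = D := by omega
    rw [htD', hterm, Nat.sub_self]
    rcases n with _ | n
    · simp
    · simp [pow_succ]
  | succ k ih =>
    intro t ht htD hk n
    rcases eq_or_lt_of_le htD with hEq | hlt
    · rw [hEq, hterm, Nat.sub_self]
      rcases n with _ | n
      · simp
      · simp [pow_succ]
    · have hrec' := hrec t ht hlt n
      obtain ⟨m, hDt⟩ : ∃ m, D - t = m + 1 := ⟨D - t - 1, by omega⟩
      have hDt1 : D - (t + 1) = m := by omega
      have ih' : ∀ n', V (t + 1) n' = σ * (1 - 1 / ((m : ℝ) + 1)) ^ n' := by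
        intro n'
        have := ih (t + 1) (by omega) (by omega) (by omega) n'
        rwa [hDt1] at this
      rw [hrec', hDt]
      simp only [ih']
      push_cast
      set M : ℝ := (m : ℝ) with hM
      have hM0 : (0 : ℝ) ≤ M := Nat.cast_nonneg m
      have h1 : M + 1 ≠ 0 := by positivity
      have h2 : M + 1 + 1 ≠ 0 := by positivity
      have hkey : (1 - 1 / (M + 1 + 1)) * (1 - 1 / (M + 1)) = M / (M + 1 + 1) := by
        field_simp
        ring
      have hsum : ∀ n' ∈ Finset.range (n + 1),
          (n.choose (n - n') : ℝ) * (1 / (M + 1 + 1)) ^ (n - n') *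
              (1 - 1 / (M + 1 + 1)) ^ (n' + 1) * (σ * (1 - 1 / (M + 1)) ^ n')
          = σ * (1 - 1 / (M + 1 + 1)) *
              ((M / (M + 1 + 1)) ^ n' * (1 / (M + 1 + 1)) ^ (n - n') * (n.choose n' : ℝ)) := by
        intro n' hn'
        have hle : n' ≤ n := by
          have := Finset.mem_range.mp hn'; omega
        rw [Nat.choose_symm hle]
        have : (1 - 1 / (M + 1 + 1)) ^ (n' + 1) * (1 - 1 / (M + 1)) ^ n'
            = (1 - 1 / (M + 1 + 1)) * (M / (M + 1 + 1)) ^ n' := by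
          rw [pow_succ', mul_assoc, ← mul_pow, hkey]
        calc (n.choose n' : ℝ) * (1 / (M + 1 + 1)) ^ (n - n') *
              (1 - 1 / (M + 1 + 1)) ^ (n' + 1) * (σ * (1 - 1 / (M + 1)) ^ n')
            = σ * ((1 - 1 / (M + 1 + 1)) ^ (n' + 1) * (1 - 1 / (M + 1)) ^ n') *
              ((1 / (M + 1 + 1)) ^ (n - n') * (n.choose n' : ℝ)) := by ring
          _ = _ := by rw [this]; ring
      rw [Finset.sum_congr rfl hsum, ← Finset.mul_sum, ← add_pow]
      have hsimp : M / (M + 1 + 1) + 1 / (M + 1 + 1) = 1 - 1 / (M + 1 + 1) := by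
        field_simp
        ring
      rw [hsimp]
      have hq : 1 / (M + 1 + 1) + (1 - 1 / (M + 1 + 1)) = 1 := by ring
      nlinarith [sq_nonneg ((1 - 1 / (M + 1 + 1)) ^ n)]
end

section
/- Let 0 < α ≤ 1 and let M ≥ 1 be an integer. Then the derivative of g(p) = Σ_{i=1}^{M+1} i·C(M+1,i)·α^i(1−α)^{M+1−i}·p(1−p)^{i−1} equals (M+1)·α·(1 − (M+1)αp)·(1 − αp)^{M−1} for all p. -/
open Finset in
lemma stmt7_closed (α : ℝ) (M : ℕ) (p : ℝ) :
    (∑ i ∈ Finset.Icc 1 (M + 1),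
        (i : ℝ) * ((M + 1).choose i : ℝ) * α ^ i * (1 - α) ^ (M + 1 - i) * p * (1 - p) ^ (i - 1))
      = (M + 1 : ℝ) * α * p * (1 - α * p) ^ M := by
  rw [← Finset.Ico_add_one_right_eq_Icc, Finset.sum_Ico_eq_sum_range]
  simp only [show M + 1 + 1 - 1 = M + 1 from rfl]
  have key : ∀ j ∈ Finset.range (M + 1),
      ((1 + j : ℕ) : ℝ) * ((M + 1).choose (1 + j) : ℝ) * α ^ (1 + j) * (1 - α) ^ (M + 1 - (1 + j))
        * p * (1 - p) ^ (1 + j - 1)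
      = (M + 1 : ℝ) * α * p *
        ((α * (1 - p)) ^ j * (1 - α) ^ (M - j) * (M.choose j : ℝ)) := by
    intro j hj
    have hj' : j ≤ M := Nat.lt_succ_iff.mp (Finset.mem_range.mp hj)
    have hch : ((1 + j : ℕ) : ℝ) * ((M + 1).choose (1 + j) : ℝ)
        = (M + 1 : ℝ) * (M.choose j : ℝ) := by
      have hn : (1 + j) * (M + 1).choose (1 + j) = (M + 1) * M.choose j := by
        rw [add_comm 1 j, mul_comm]
        exact (Nat.add_one_mul_choose_eq M j).symm
      exact_mod_cast hn
    rw [hch]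
    have h1 : M + 1 - (1 + j) = M - j := by omega
    have h2 : 1 + j - 1 = j := by omega
    rw [h1, h2, pow_add, mul_pow]
    ring
  rw [Finset.sum_congr rfl key, ← Finset.mul_sum, ← add_pow]
  ring_nf

open Finset in
/-- The derivative identity of Appendix D: with `c_i = C(M+1,i)α^i(1−α)^{M+1−i}`,
`g(p) = Σ_{i=1}^{M+1} i·c_i·p(1−p)^{i−1}` has derivative
`g'(p) = (M+1)α(1 − (M+1)αp)(1 − αp)^{M−1}`. -/
theorem stmt7 (α : ℝ) (hα : 0 < α) (hα' : α ≤ 1) (M : ℕ) (hM : 1 ≤ M) (p : ℝ) :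
    HasDerivAt
      (fun p : ℝ => ∑ i ∈ Finset.Icc 1 (M + 1),
        (i : ℝ) * ((M + 1).choose i : ℝ) * α ^ i * (1 - α) ^ (M + 1 - i) * p * (1 - p) ^ (i - 1))
      ((M + 1 : ℝ) * α * (1 - (M + 1 : ℝ) * α * p) * (1 - α * p) ^ (M - 1)) p := by
  have hfun : (fun p : ℝ => ∑ i ∈ Finset.Icc 1 (M + 1),
        (i : ℝ) * ((M + 1).choose i : ℝ) * α ^ i * (1 - α) ^ (M + 1 - i) * p * (1 - p) ^ (i - 1))
      = fun p : ℝ => (M + 1 : ℝ) * α * p * (1 - α * p) ^ M := by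
    funext q
    exact stmt7_closed α M q
  rw [hfun]
  have h1 : HasDerivAt (fun p : ℝ => 1 - α * p) (-α) p := by
    simpa using ((hasDerivAt_id p).const_mul α).const_sub 1
  have h2 : HasDerivAt (fun p : ℝ => (1 - α * p) ^ M)
      ((M : ℝ) * (1 - α * p) ^ (M - 1) * (-α)) p := h1.pow M
  have h3 : HasDerivAt (fun p : ℝ => (M + 1 : ℝ) * α * p)
      ((M + 1 : ℝ) * α) p := by
    simpa using (hasDerivAt_id p).const_mul ((M + 1 : ℝ) * α)
  have := h3.mul h2
  convert this using 1
  iterate 3 rfl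
  have hMpow : (1 - α * p) ^ M = (1 - α * p) * (1 - α * p) ^ (M - 1) := by
    conv_lhs => rw [show M = (M - 1) + 1 by omega]
    rw [pow_succ]
    ring
  rw [hMpow]
  ring
end

section
/- Let 0 < α ≤ 1, M ≥ 1, and g(p) = Σ_{i=1}^{M+1} i·C(M+1,i)·α^i·(1−α)^{M+1−i}·p·(1−p)^{i−1}. Then g is maximized over p ∈ [0,1] at p = min(1/((M+1)α), 1). -/
/-!
Since `i * C(M+1, i) = (M+1) * C(M, i-1)`, the binomial theorem collapses the sum to
`g p = (M+1) * f (α p)` with `f t = t (1-t)^M`. The function `f` increases on `[0, 1/(M+1)]` and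
decreases on `[1/(M+1), 1]`, and `α p` ranges over `[0, α]`, so `g` is maximal where
`α p = min (1/(M+1)) α`.
-/

open Finset

theorem sum_Icc_mul_choose_mul_pow {R : Type*} [CommSemiring R] (x y p q : R) (n : ℕ) :
    ∑ i ∈ Icc 1 (n + 1),
        (i : R) * ((n + 1).choose i : R) * x ^ i * y ^ (n + 1 - i) * p * q ^ (i - 1)
      = (n + 1) * x * p * (x * q + y) ^ n := by
  have hIcc : Icc 1 (n + 1) = Ico (0 + 1) (n + 1 + 1) := rfl
  rw [hIcc, ← sum_Ico_add', ← range_eq_Ico, add_pow, mul_sum]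
  refine sum_congr rfl fun k _ => ?_
  have hchoose :
      ((k + 1 : ℕ) : R) * ((n + 1).choose (k + 1) : R) = (n + 1) * (n.choose k : R) := by
    rw [mul_comm, ← Nat.cast_mul, ← Nat.add_one_mul_choose_eq]; push_cast; rfl
  rw [Nat.add_sub_cancel, Nat.add_sub_add_right]
  calc _ = ((k + 1 : ℕ) : R) * ((n + 1).choose (k + 1) : R) *
          (x ^ (k + 1) * y ^ (n - k) * p * q ^ k) := by ring
    _ = _ := by rw [hchoose]; ring

section UnimodalPeak

variable {n : ℕ}

theorem hasDerivAt_mul_one_sub_pow (hn : 1 ≤ n) (x : ℝ) :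
    HasDerivAt (fun t : ℝ => t * (1 - t) ^ n) ((1 - x) ^ (n - 1) * (1 - (n + 1) * x)) x := by
  have hpow : HasDerivAt (fun t : ℝ => (1 - t) ^ n) (n * (1 - x) ^ (n - 1) * -1) x :=
    ((hasDerivAt_id x).const_sub 1).pow n
  refine ((hasDerivAt_id x).mul hpow).congr_deriv ?_
  rw [← pow_sub_one_mul (by omega : n ≠ 0) (1 - x), id]
  ring

theorem monotoneOn_mul_one_sub_pow (hn : 1 ≤ n) :
    MonotoneOn (fun t : ℝ => t * (1 - t) ^ n) (Set.Icc 0 (1 / (n + 1))) := by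
  refine monotoneOn_of_hasDerivWithinAt_nonneg (convex_Icc _ _)
    (fun x _ => (hasDerivAt_mul_one_sub_pow hn x).continuousAt.continuousWithinAt)
    (fun x _ => (hasDerivAt_mul_one_sub_pow hn x).hasDerivWithinAt) fun x hx => ?_
  rw [interior_Icc, Set.mem_Ioo, lt_div_iff₀ (by positivity)] at hx
  have hn' : (1 : ℝ) ≤ n := by exact_mod_cast hn
  exact mul_nonneg (pow_nonneg (by nlinarith) _) (by linarith)

theorem antitoneOn_mul_one_sub_pow (hn : 1 ≤ n) :
    AntitoneOn (fun t : ℝ => t * (1 - t) ^ n) (Set.Icc (1 / (n + 1)) 1) := by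
  refine antitoneOn_of_hasDerivWithinAt_nonpos (convex_Icc _ _)
    (fun x _ => (hasDerivAt_mul_one_sub_pow hn x).continuousAt.continuousWithinAt)
    (fun x _ => (hasDerivAt_mul_one_sub_pow hn x).hasDerivWithinAt) fun x hx => ?_
  rw [interior_Icc, Set.mem_Ioo, div_lt_iff₀ (by positivity)] at hx
  exact mul_nonpos_of_nonneg_of_nonpos (pow_nonneg (by linarith) _) (by linarith)

theorem mul_one_sub_pow_le_min (hn : 1 ≤ n) {a t : ℝ} (ha : a ≤ 1) (ht : t ∈ Set.Icc 0 a) :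
    t * (1 - t) ^ n ≤ min (1 / (n + 1 : ℝ)) a * (1 - min (1 / (n + 1 : ℝ)) a) ^ n := by
  rcases le_total a (1 / (n + 1)) with hac | hca
  · rw [min_eq_right hac]
    exact monotoneOn_mul_one_sub_pow hn ⟨ht.1, ht.2.trans hac⟩ ⟨ht.1.trans ht.2, hac⟩ ht.2
  rw [min_eq_left hca]
  rcases le_total t (1 / (n + 1)) with htc | hct
  · exact monotoneOn_mul_one_sub_pow hn ⟨ht.1, htc⟩ ⟨by positivity, le_rfl⟩ htc
  · exact antitoneOn_mul_one_sub_pow hn ⟨le_rfl, hca.trans ha⟩ ⟨hct, ht.2.trans ha⟩ hct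

end UnimodalPeak

/-- `g(p) = Σ_{i=1}^{M+1} i·C(M+1,i)α^i(1−α)^{M+1−i}·p(1−p)^{i−1}` is maximized over
`[0,1]` at `p = min(1/((M+1)α), 1)`. -/
theorem stmt8 (α : ℝ) (hα : 0 < α) (hα' : α ≤ 1) (M : ℕ) (hM : 1 ≤ M) :
    let g : ℝ → ℝ := fun p => ∑ i ∈ Finset.Icc 1 (M + 1),
      (i : ℝ) * ((M + 1).choose i : ℝ) * α ^ i * (1 - α) ^ (M + 1 - i) * p * (1 - p) ^ (i - 1)
    ∀ p ∈ Set.Icc (0:ℝ) 1, g p ≤ g (min (1 / ((M + 1 : ℝ) * α)) 1) := by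
  intro g p hp
  have hg : ∀ q, g q = (M + 1) * (α * q * (1 - α * q) ^ M) := fun q => by
    simp only [g]
    rw [sum_Icc_mul_choose_mul_pow]
    ring
  have hpeak : α * min (1 / ((M + 1 : ℝ) * α)) 1 = min (1 / (M + 1 : ℝ)) α := by
    rw [mul_min_of_nonneg _ _ hα.le, mul_one]
    field_simp
  rw [hg, hg, hpeak]
  have hαp : α * p ∈ Set.Icc 0 α :=
    ⟨mul_nonneg hα.le hp.1, mul_le_of_le_one_right hα.le hp.2⟩
  exact mul_le_mul_of_nonneg_left (mul_one_sub_pow_le_min hM hα' hαp) (by positivity)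
end

section
/- Let 0 < α < 1, 0 < p ≤ 1, M ≥ 1. Define the posterior pmf after a busy observation: for 0 ≤ n' ≤ M−1, b'(n') = [C(M,n')·(α(1−p))^{n'}·(1−α(1−p))^{M−n'} − (1−αp)^M·C(M,n')·((α−αp)/(1−αp))^{n'}·(1−(α−αp)/(1−αp))^{M−n'}] / (1 − (1−αp)^M). Then b' is a probability distribution on {0,…,M−1}, and its mean equals M·(α − αp)·(1 − (1−αp)^{M−1}) / (1 − (1−αp)^M). -/
/-!
With `q = α(1 - p)` and `r = 1 - αp`, the subtracted term is `r^M · C(M,n) (q/r)^n ((1-α)/r)^(M-n)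
= C(M,n) q^n (1-α)^(M-n)`, so `b'(n)` is the difference of the `n`-th terms of the binomial
expansions of `(q + (1-q))^M = 1` and `(q + (1-α))^M = r^M`, divided by `1 - r^M`.
The two terms agree at `n = M`, so summing over `n < M` gives `1 - r^M`, and the absorption
identity `k C(M,k) = M C(M-1,k-1)` gives the first moment `M q (1 - r^(M-1))`.
-/

open Finset

section BinomTerm

variable {R : Type*}

def binomTerm [CommSemiring R] (n : ℕ) (x y : R) (k : ℕ) : R :=
  n.choose k * x ^ k * y ^ (n - k)

section CommSemiring

variable [CommSemiring R]

theorem binomTerm_self (n : ℕ) (x y : R) : binomTerm n x y n = x ^ n := by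
  simp [binomTerm]

theorem sum_range_binomTerm (n : ℕ) (x y : R) :
    ∑ k ∈ range (n + 1), binomTerm n x y k = (x + y) ^ n := by
  rw [add_pow]
  exact sum_congr rfl fun k _ => by unfold binomTerm; ring

theorem natCast_succ_mul_binomTerm_succ (m i : ℕ) (x y : R) :
    ((i + 1 : ℕ) : R) * binomTerm (m + 1) x y (i + 1) = (m + 1) * x * binomTerm m x y i := by
  have absorb : ((m + 1).choose (i + 1) : R) * ((i : R) + 1) = ((m : R) + 1) * m.choose i := by
    exact_mod_cast congrArg (Nat.cast : ℕ → R) (Nat.add_one_mul_choose_eq m i).symm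
  unfold binomTerm
  rw [Nat.add_sub_add_right]
  calc _ = ((m + 1).choose (i + 1) : R) * ((i : R) + 1) * x * (x ^ i * y ^ (m - i)) := by
          push_cast; ring
    _ = _ := by rw [absorb]; ring

theorem sum_range_natCast_mul_binomTerm (n : ℕ) (x y : R) :
    ∑ k ∈ range (n + 1), (k : R) * binomTerm n x y k = n * x * (x + y) ^ (n - 1) := by
  cases n with
  | zero => simp
  | succ m =>
    simp only [sum_range_succ' _ (m + 1), natCast_succ_mul_binomTerm_succ, ← mul_sum,
      sum_range_binomTerm]
    simp

end CommSemiring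

section CommRing

variable [CommRing R]

theorem sum_range_binomTerm_sub (n : ℕ) (x y z : R) :
    ∑ k ∈ range n, (binomTerm n x y k - binomTerm n x z k) = (x + y) ^ n - (x + z) ^ n := by
  rw [← sum_range_binomTerm n x y, ← sum_range_binomTerm n x z, ← sum_sub_distrib,
    sum_range_succ, binomTerm_self, binomTerm_self, sub_self, add_zero]

theorem sum_range_natCast_mul_binomTerm_sub (n : ℕ) (x y z : R) :
    ∑ k ∈ range n, (k : R) * (binomTerm n x y k - binomTerm n x z k)
      = n * x * ((x + y) ^ (n - 1) - (x + z) ^ (n - 1)) := by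
  rw [mul_sub, ← sum_range_natCast_mul_binomTerm n x y, ← sum_range_natCast_mul_binomTerm n x z,
    ← sum_sub_distrib, sum_range_succ, binomTerm_self, binomTerm_self]
  simp only [mul_sub, sub_self, add_zero]

end CommRing

theorem binomTerm_le_binomTerm [CommSemiring R] [PartialOrder R] [IsOrderedRing R]
    (n : ℕ) {x y z : R} (k : ℕ) (hx : 0 ≤ x) (hz : 0 ≤ z) (hzy : z ≤ y) :
    binomTerm n x z k ≤ binomTerm n x y k := by
  unfold binomTerm
  gcongr

theorem pow_mul_binomTerm_div {K : Type*} [Field K] {n k : ℕ} (x : K) {r : K} (hr : r ≠ 0)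
    (hk : k ≤ n) : r ^ n * binomTerm n (x / r) (1 - x / r) k = binomTerm n x (r - x) k := by
  obtain ⟨j, rfl⟩ := Nat.exists_eq_add_of_le hk
  unfold binomTerm
  rw [Nat.add_sub_cancel_left, one_sub_div hr, div_pow, div_pow, pow_add]
  field_simp

end BinomTerm

/-- The posterior after a busy observation is a probability distribution on `{0,…,M−1}`
with mean `M(α−αp)(1−(1−αp)^{M−1})/(1−(1−αp)^M)`. -/
theorem stmt10 (α p : ℝ) (hα : 0 < α) (hα' : α < 1) (hp : 0 < p) (hp' : p ≤ 1)
    (M : ℕ) (hM : 1 ≤ M) :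
    let b' : ℕ → ℝ := fun n' =>
      ((M.choose n' : ℝ) * (α * (1 - p)) ^ n' * (1 - α * (1 - p)) ^ (M - n')
        - (1 - α * p) ^ M * (M.choose n' : ℝ) * ((α - α * p) / (1 - α * p)) ^ n' *
            (1 - (α - α * p) / (1 - α * p)) ^ (M - n'))
        / (1 - (1 - α * p) ^ M)
    (∀ n' < M, 0 ≤ b' n') ∧
    (∑ n' ∈ Finset.range M, b' n' = 1) ∧
    (∑ n' ∈ Finset.range M, (n' : ℝ) * b' n'
      = M * (α - α * p) * (1 - (1 - α * p) ^ (M - 1)) / (1 - (1 - α * p) ^ M)) := by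
  intro b'
  have hr : 0 < 1 - α * p := by nlinarith
  have hD : 0 < 1 - (1 - α * p) ^ M :=
    sub_pos.2 (pow_lt_one₀ hr.le (by nlinarith) (by omega))
  have hb : ∀ n < M, b' n = (binomTerm M (α * (1 - p)) (1 - α * (1 - p)) n
      - binomTerm M (α * (1 - p)) (1 - α) n) / (1 - (1 - α * p) ^ M) := by
    intro n hn
    have h : binomTerm M (α * (1 - p)) (1 - α) n = (1 - α * p) ^ M *
        binomTerm M ((α - α * p) / (1 - α * p)) (1 - (α - α * p) / (1 - α * p)) n := by
      rw [pow_mul_binomTerm_div _ hr.ne' hn.le]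
      congr 1 <;> ring
    rw [h]
    simp only [b', binomTerm]
    ring
  refine ⟨fun n hn => ?_, ?_, ?_⟩
  · rw [hb n hn]
    exact div_nonneg (sub_nonneg.2 (binomTerm_le_binomTerm M n (by nlinarith) (by linarith)
      (by nlinarith))) hD.le
  · rw [sum_congr rfl fun n hn => hb n (mem_range.1 hn), ← sum_div, sum_range_binomTerm_sub,
      show α * (1 - p) + (1 - α * (1 - p)) = 1 by ring,
      show α * (1 - p) + (1 - α) = 1 - α * p by ring, one_pow, div_self hD.ne']
  · rw [sum_congr rfl fun n hn => by rw [hb n (mem_range.1 hn), mul_div_assoc'], ← sum_div,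
      sum_range_natCast_mul_binomTerm_sub, show α * (1 - p) + (1 - α * (1 - p)) = 1 by ring,
      show α * (1 - p) + (1 - α) = 1 - α * p by ring, one_pow]
    ring
end

section
/- Let σ > 0, D ≥ 2, and u = σ·(3D−5)/(3D−2) (the optimal continuation value U*_2(1,1)). Then max_{p∈[0,1]} [2σp(1−p) + (1−p)²·u] = σ²/(2σ−u) = σ·(3D−2)/(3D+1). -/
/-!
Completing the square, `σ² - (2σ - u) · (2σp(1-p) + (1-p)²u) = ((2σ - u)p - (σ - u))²`, so
the quadratic is maximized at `p* = (σ - u)/(2σ - u)`, which lies in `[0, 1]` exactly when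
`u ≤ σ`. With `u = σ(3D-5)/(3D-2)` one has `2σ - u = σ(3D+1)/(3D-2)`, giving the closed form.
-/

section OneShotQuadratic

variable {σ u : ℝ}

theorem two_mul_mul_one_sub_add_sq_mul_le (hu : u < 2 * σ) (p : ℝ) :
    2 * σ * p * (1 - p) + (1 - p) ^ 2 * u ≤ σ ^ 2 / (2 * σ - u) := by
  have hpos : 0 < 2 * σ - u := by linarith
  rw [le_div_iff₀ hpos]
  nlinarith [sq_nonneg ((2 * σ - u) * p - (σ - u))]

theorem two_mul_mul_one_sub_add_sq_mul_at_optimum (hu : u < 2 * σ) :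
    let p := (σ - u) / (2 * σ - u)
    2 * σ * p * (1 - p) + (1 - p) ^ 2 * u = σ ^ 2 / (2 * σ - u) := by
  have hne : 2 * σ - u ≠ 0 := by linarith
  field_simp
  ring

theorem isGreatest_two_mul_mul_one_sub_add_sq_mul (hσ : 0 < σ) (huσ : u ≤ σ) :
    IsGreatest ((fun p : ℝ => 2 * σ * p * (1 - p) + (1 - p) ^ 2 * u) '' Set.Icc 0 1)
      (σ ^ 2 / (2 * σ - u)) := by
  have hu : u < 2 * σ := by linarith
  have hpos : 0 < 2 * σ - u := by linarith
  refine ⟨⟨(σ - u) / (2 * σ - u), ⟨?_, ?_⟩, two_mul_mul_one_sub_add_sq_mul_at_optimum hu⟩, ?_⟩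
  · exact div_nonneg (by linarith) hpos.le
  · rw [div_le_one hpos]
    linarith
  · rintro _ ⟨p, -, rfl⟩
    exact two_mul_mul_one_sub_add_sq_mul_le hu p

end OneShotQuadratic

theorem sq_div_two_mul_sub_continuation_value {σ d : ℝ} (hσ : σ ≠ 0) (hd : 1 < d) :
    σ ^ 2 / (2 * σ - σ * (3 * d - 5) / (3 * d - 2)) = σ * (3 * d - 2) / (3 * d + 1) := by
  have h₁ : 3 * d - 2 ≠ 0 := by linarith
  have h₂ : 3 * d + 1 ≠ 0 := by linarith
  have hgap : 2 * σ - σ * (3 * d - 5) / (3 * d - 2) = σ * (3 * d + 1) / (3 * d - 2) := by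
    field_simp
    ring
  rw [hgap]
  field_simp

/-- With `u = σ(3D−5)/(3D−2)`, the maximum over `[0,1]` of `2σp(1−p) + (1−p)²u` is
`σ²/(2σ−u) = σ(3D−2)/(3D+1)`. -/
theorem stmt17 (σ : ℝ) (hσ : 0 < σ) (D : ℕ) (hD : 2 ≤ D) :
    let u : ℝ := σ * (3 * D - 5 : ℕ) / (3 * D - 2 : ℕ)
    IsGreatest ((fun p : ℝ => 2 * σ * p * (1 - p) + (1 - p) ^ 2 * u) '' Set.Icc 0 1)
      (σ ^ 2 / (2 * σ - u)) ∧
    σ ^ 2 / (2 * σ - u) = σ * (3 * D - 2 : ℕ) / (3 * D + 1 : ℕ) := by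
  intro u
  have hden : (0 : ℝ) < (3 * D - 2 : ℕ) := by exact_mod_cast (by omega : 0 < 3 * D - 2)
  have huσ : u ≤ σ := by
    rw [div_le_iff₀ hden]
    exact mul_le_mul_of_nonneg_left (by exact_mod_cast (by omega : 3 * D - 5 ≤ 3 * D - 2)) hσ.le
  refine ⟨isGreatest_two_mul_mul_one_sub_add_sq_mul hσ huσ, ?_⟩
  have hd : (1 : ℝ) < D := by exact_mod_cast (by omega : 1 < D)
  simp only [u, Nat.cast_sub (by omega : 5 ≤ 3 * D), Nat.cast_sub (by omega : 2 ≤ 3 * D)]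
  push_cast
  exact sq_div_two_mul_sub_continuation_value hσ.ne' hd
end
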